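/- Let $0 < a_1 < a_2 < \bar a$ and $0 \le \omega < V_*$. Then $\Upsilon_\omega(a_2) \le \Upsilon_\omega(a_1) + \Upsilon_\omega\big(\sqrt{a_2^2 - a_1^2}\big)$. Moreover, if $\Upsilon_\omega(a_1)$ or $\Upsilon_\omega(\sqrt{a_2^2-a_1^2})$ is attained, the inequality is strict. -/

import Mathlib

/-!
Dilating `u ↦ u(·/κ)` with `κ³ = θ²`, `θ > 1`, multiplies the mass by `θ²` and gives
`J_ω(u(·/κ)) = θ² J_ω(u) - ½(θ² - κ)‖∇u‖₂² < θ² J_ω(u)`. If `‖u‖₂ = b` and `J_ω(u) < 0`, the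
lower bound `J_0(u) ≥ ‖∇u‖₂² g(‖u‖₂, ‖∇u‖₂)` forces `g(b, ‖∇u‖₂) < 0`, and since `g(ā, r̄) = 0`
this means `‖∇u‖₂ < (b/ā)^{1/3} r̄`; so the dilate stays in `W^{θb}_{r̄}`. Hence
`Υ_ω(θb) ≤ θ² Υ_ω(b)`, strictly if `Υ_ω(b)` is attained, and adding the cases `θ = a₂/a₁` and
`θ = a₂/√(a₂² - a₁²)` with weights `a₁²/a₂²` and `(a₂² - a₁²)/a₂²` gives the claim.
-/

open MeasureTheory Set

noncomputable section

/-- Points of `ℝ³`. -/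
abbrev E3 := EuclideanSpace ℝ (Fin 3)

/-- The dipole kernel `K(x) = (1 - 3 cos²θ(x)) / |x|³`, where `θ(x)` is the angle between
`x` and the dipole axis `(0,0,1)`, so that `cos θ(x) = x₃ / |x|`. -/
def K3 (x : E3) : ℝ := (1 - 3 * (x 2 / ‖x‖) ^ 2) / ‖x‖ ^ 3

/-- The nonlinear potential energy `N(u) = ∫ λ₁|u|⁴ + λ₂ (K ∗ |u|²)|u|² dx`. -/
def Nfun (l1 l2 : ℝ) (u : E3 → ℝ) : ℝ :=
  ∫ x : E3, (l1 * (u x) ^ 4 + l2 * (∫ y : E3, K3 (x - y) * (u y) ^ 2) * (u x) ^ 2)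

/-- `‖u‖₂² = ∫ |u|²`. -/
def massSq (u : E3 → ℝ) : ℝ := ∫ x : E3, (u x) ^ 2

/-- `‖∇u‖₂² = ∫ |∇u|²`. -/
def gradSq (u : E3 → ℝ) : ℝ := ∫ x : E3, ‖fderiv ℝ u x‖ ^ 2

/-- `‖u‖ₚᵖ = ∫ |u|ᵖ`. -/
def Pnorm (p : ℝ) (u : E3 → ℝ) : ℝ := ∫ x : E3, |u x| ^ p

/-- The energy functional
`J_ω(u) = (1/2)‖∇u‖₂² + ω‖u‖₂² + (1/2)N(u) + (2λ₃/p)‖u‖ₚᵖ`. -/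
def Jfun (ω l1 l2 l3 p : ℝ) (u : E3 → ℝ) : ℝ :=
  1 / 2 * gradSq u + ω * massSq u + 1 / 2 * Nfun l1 l2 u + 2 * l3 / p * Pnorm p u

/-- `W^a_{r̄} = {u ∈ S(a) : ‖∇u‖₂ < r̄}`. -/
def Wset (a rbar : ℝ) : Set (E3 → ℝ) :=
  {u | massSq u = a ^ 2 ∧ Real.sqrt (gradSq u) < rbar}

/-- `∂W^a_{r̄} = {u ∈ S(a) : ‖∇u‖₂ = r̄}`. -/
def bdryWset (a rbar : ℝ) : Set (E3 → ℝ) :=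
  {u | massSq u = a ^ 2 ∧ Real.sqrt (gradSq u) = rbar}

/-- The unstable regime `𝓑 = {(λ₁,λ₂) : λ₁ < (4π/3)λ₂ ≤ 0 or λ₁ < -(8π/3)λ₂ ≤ 0}`. -/
def Bset : Set (ℝ × ℝ) :=
  {q | (q.1 < 4 * Real.pi / 3 * q.2 ∧ 4 * Real.pi / 3 * q.2 ≤ 0) ∨
       (q.1 < -(8 * Real.pi / 3) * q.2 ∧ -(8 * Real.pi / 3) * q.2 ≤ 0)}

lemma sInf_image_le_mul_sInf_image {ι : Type*} {f : ι → ℝ} {S T : Set ι} {c : ℝ} (hc : 0 < c)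
    (hT : BddBelow (f '' T)) (hS : sInf (f '' S) < 0)
    (h : ∀ u ∈ S, f u < 0 → ∃ v ∈ T, f v < c * f u) :
    sInf (f '' T) ≤ c * sInf (f '' S) := by
  have hne : (f '' S).Nonempty := by
    by_contra hemp
    rw [Set.not_nonempty_iff_eq_empty.mp hemp, Real.sInf_empty] at hS
    exact lt_irrefl 0 hS
  have hlt (u : ι) (hu : u ∈ S) (hfu : f u < 0) : sInf (f '' T) < c * f u := by
    obtain ⟨v, hv, hfv⟩ := h u hu hfu
    exact (csInf_le hT (mem_image_of_mem f hv)).trans_lt hfv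
  obtain ⟨_, ⟨u₀, hu₀, rfl⟩, hfu₀⟩ := exists_lt_of_csInf_lt hne hS
  have hTneg : sInf (f '' T) < 0 :=
    (hlt u₀ hu₀ hfu₀).trans (mul_neg_of_pos_of_neg hc hfu₀)
  rw [← div_le_iff₀' hc]
  refine le_csInf hne ?_
  rintro _ ⟨u, hu, rfl⟩
  rcases lt_or_ge (f u) 0 with hfu | hfu
  · exact (div_le_iff₀' hc).mpr (hlt u hu hfu).le
  · exact (div_neg_of_neg_of_pos hTneg hc).le.trans hfu

lemma sInf_image_lt_mul_sInf_image {ι : Type*} {f : ι → ℝ} {S T : Set ι} {c : ℝ}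
    (hT : BddBelow (f '' T)) (hS : sInf (f '' S) < 0)
    (h : ∀ u ∈ S, f u < 0 → ∃ v ∈ T, f v < c * f u)
    (hmin : ∃ u ∈ S, f u = sInf (f '' S)) :
    sInf (f '' T) < c * sInf (f '' S) := by
  obtain ⟨u, hu, hfu⟩ := hmin
  obtain ⟨v, hv, hfv⟩ := h u hu (hfu ▸ hS)
  rw [← hfu]
  exact (csInf_le hT (mem_image_of_mem f hv)).trans_lt hfv

lemma le_add_of_le_sq_div_mul {x y z a b c : ℝ} (ha : a ≠ 0) (hb : b ≠ 0)
    (habc : a ^ 2 + b ^ 2 = c ^ 2) (hy : x ≤ (c / a) ^ 2 * y) (hz : x ≤ (c / b) ^ 2 * z) :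
    x ≤ y + z := by
  rw [div_pow, div_mul_eq_mul_div, le_div_iff₀ (by positivity)] at hy hz
  have hc : 0 < c ^ 2 := by rw [← habc]; positivity
  refine le_of_mul_le_mul_left ?_ hc
  rw [← habc] at hy hz ⊢
  linarith

lemma lt_add_of_lt_sq_div_mul {x y z a b c : ℝ} (ha : a ≠ 0) (hb : b ≠ 0)
    (habc : a ^ 2 + b ^ 2 = c ^ 2) (hy : x < (c / a) ^ 2 * y) (hz : x ≤ (c / b) ^ 2 * z) :
    x < y + z := by
  rw [div_pow, div_mul_eq_mul_div] at hy hz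
  rw [lt_div_iff₀ (by positivity)] at hy
  rw [le_div_iff₀ (by positivity)] at hz
  have hc : 0 < c ^ 2 := by rw [← habc]; positivity
  refine lt_of_mul_lt_mul_left ?_ hc.le
  rw [← habc] at hy hz ⊢
  linarith

lemma K3_smul {c : ℝ} (hc : 0 < c) (y : E3) : K3 (c • y) = c⁻¹ ^ 3 * K3 y := by
  rcases eq_or_ne y 0 with rfl | hy
  · simp [K3]
  have hny : ‖y‖ ≠ 0 := norm_ne_zero_iff.mpr hy
  simp only [K3, PiLp.smul_apply, smul_eq_mul, norm_smul, Real.norm_eq_abs, abs_of_pos hc]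
  field_simp

lemma massSq_dilate (u : E3 → ℝ) {c : ℝ} (hc : 0 < c) :
    massSq (fun x => u (c⁻¹ • x)) = c ^ 3 * massSq u := by
  simp [massSq, Measure.integral_comp_inv_smul_of_nonneg _ (fun z => u z ^ 2) hc.le]

lemma Pnorm_dilate (p : ℝ) (u : E3 → ℝ) {c : ℝ} (hc : 0 < c) :
    Pnorm p (fun x => u (c⁻¹ • x)) = c ^ 3 * Pnorm p u := by
  simp [Pnorm, Measure.integral_comp_inv_smul_of_nonneg _ (fun z => |u z| ^ p) hc.le]

lemma gradSq_dilate (u : E3 → ℝ) {c : ℝ} (hc : 0 < c) :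
    gradSq (fun x => u (c⁻¹ • x)) = c * gradSq u := by
  have hnorm (x : E3) : ‖fderiv ℝ (fun y => u (c⁻¹ • y)) x‖ ^ 2
      = c⁻¹ ^ 2 * ‖fderiv ℝ u (c⁻¹ • x)‖ ^ 2 := by
    rw [fderiv_comp_smul, norm_smul, Real.norm_eq_abs, abs_of_pos (inv_pos.mpr hc), mul_pow]
  simp only [gradSq, hnorm, integral_const_mul,
    Measure.integral_comp_inv_smul_of_nonneg _ (fun z => ‖fderiv ℝ u z‖ ^ 2) hc.le]
  simp only [inv_pow, finrank_euclideanSpace, Fintype.card_fin, smul_eq_mul]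
  field_simp

lemma potential_dilate (u : E3 → ℝ) {c : ℝ} (hc : 0 < c) (w : E3) :
    ∫ y : E3, K3 (c • w - y) * u (c⁻¹ • y) ^ 2 = ∫ y : E3, K3 (w - y) * u y ^ 2 := by
  have hcc (y : E3) : c • c⁻¹ • y = y := by rw [smul_smul, mul_inv_cancel₀ hc.ne', one_smul]
  calc ∫ y : E3, K3 (c • w - y) * u (c⁻¹ • y) ^ 2
      = ∫ y : E3, K3 (c • w - c • c⁻¹ • y) * u (c⁻¹ • y) ^ 2 := by simp only [hcc]
    _ = c ^ 3 * ∫ y : E3, K3 (c • (w - y)) * u y ^ 2 := by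
      rw [Measure.integral_comp_inv_smul_of_nonneg _
        (fun z => K3 (c • w - c • z) * u z ^ 2) hc.le]
      simp [smul_sub]
    _ = ∫ y : E3, K3 (w - y) * u y ^ 2 := by
      simp only [K3_smul hc, mul_assoc, integral_const_mul]
      field_simp

lemma Nfun_dilate (l1 l2 : ℝ) (u : E3 → ℝ) {c : ℝ} (hc : 0 < c) :
    Nfun l1 l2 (fun x => u (c⁻¹ • x)) = c ^ 3 * Nfun l1 l2 u := by
  have hcc (x : E3) : x = c • c⁻¹ • x := by rw [smul_smul, mul_inv_cancel₀ hc.ne', one_smul]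
  have hpot (x : E3) : ∫ y : E3, K3 (x - y) * u (c⁻¹ • y) ^ 2
      = ∫ y : E3, K3 (c⁻¹ • x - y) * u y ^ 2 := by
    conv_lhs => rw [hcc x]
    exact potential_dilate u hc _
  simp only [Nfun, hpot]
  rw [Measure.integral_comp_inv_smul_of_nonneg _
    (fun w => l1 * u w ^ 4 + l2 * (∫ y : E3, K3 (w - y) * u y ^ 2) * u w ^ 2) hc.le]
  simp

lemma Jfun_dilate (ω l1 l2 l3 p : ℝ) (u : E3 → ℝ) {c : ℝ} (hc : 0 < c) :
    Jfun ω l1 l2 l3 p (fun x => u (c⁻¹ • x))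
      = c ^ 3 * Jfun ω l1 l2 l3 p u - 1 / 2 * (c ^ 3 - c) * gradSq u := by
  simp only [Jfun, massSq_dilate u hc, Pnorm_dilate p u hc, gradSq_dilate u hc,
    Nfun_dilate l1 l2 u hc]
  ring

-- The paper's `g(b, r)`, with its coefficients and exponents left free.
def lowerFactor (A B s t b r : ℝ) : ℝ := 1 / 2 - A * r * b - B * b ^ s * r ^ t

def JfunLowerBound (l1 l2 l3 p A B s t : ℝ) : Prop :=
  ∀ (u : E3 → ℝ) (b : ℝ), 0 < b → massSq u = b ^ 2 →
    gradSq u * lowerFactor A B s t b (Real.sqrt (gradSq u)) ≤ Jfun 0 l1 l2 l3 p u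

lemma alpha_pos {A m q α : ℝ} (hA : 0 < A) (hm : 0 < m) (hq : q < 2)
    (hα : α = 1 / 2 * A ^ ((q - 2) / (q - 3)) * (4 * (2 - q) * m) ^ (1 / (3 - q))
      + 2 * m ^ (1 / (3 - q)) * (4 * (2 - q) / A) ^ ((q - 2) / (3 - q))) :
    0 < α := by
  have h2q : 0 < 2 - q := by linarith
  rw [hα]
  positivity

lemma lowerFactor_abar_rbar_eq_zero {A m q α abar rbar : ℝ} (hA : 0 < A) (hm : 0 < m)
    (hq : q < 2)
    (hα : α = 1 / 2 * A ^ ((q - 2) / (q - 3)) * (4 * (2 - q) * m) ^ (1 / (3 - q))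
      + 2 * m ^ (1 / (3 - q)) * (4 * (2 - q) / A) ^ ((q - 2) / (3 - q)))
    (habar : abar = (1 / (2 * α)) ^ ((3 : ℝ) / 4))
    (hrbar : rbar = (4 * (2 - q) / A * m) ^ (1 / (3 - q)) * abar ^ ((1 : ℝ) / 3)) :
    lowerFactor (A / 2) (2 * m) (2 - q / 3) (q - 2) abar rbar = 0 := by
  have hαpos := alpha_pos hA hm hq hα
  have h3q : 3 - q ≠ 0 := by linarith
  have hq3 : q - 3 ≠ 0 := by linarith
  have h2q : 0 < 2 - q := by linarith
  have hK : 0 < 4 * (2 - q) / A := by positivity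
  have habarpos : 0 < abar := by rw [habar]; positivity
  have habar43 : abar ^ ((4 : ℝ) / 3) = 1 / (2 * α) := by
    rw [habar, ← Real.rpow_mul (by positivity)]
    norm_num
  -- both terms are `ā^{4/3}` times one of the two summands of `α`
  have hT1 : A / 2 * rbar * abar
      = 1 / 2 * A ^ ((q - 2) / (q - 3)) * (4 * (2 - q) * m) ^ (1 / (3 - q))
        * abar ^ ((4 : ℝ) / 3) := by
    have hA' : A = A ^ ((q - 2) / (q - 3)) * A ^ (1 / (3 - q)) := by
      rw [← Real.rpow_add hA, show (q - 2) / (q - 3) + 1 / (3 - q) = 1 by field_simp; ring,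
        Real.rpow_one]
    have habar' : abar ^ ((4 : ℝ) / 3) = abar ^ ((1 : ℝ) / 3) * abar := by
      rw [← Real.rpow_add_one habarpos.ne']; norm_num
    rw [hrbar, habar', show 4 * (2 - q) / A * m = 4 * (2 - q) * m / A by ring,
      Real.div_rpow (by positivity) hA.le]
    nth_rewrite 1 [hA']
    field_simp
  have hT2 : 2 * m * abar ^ (2 - q / 3) * rbar ^ (q - 2)
      = 2 * m ^ (1 / (3 - q)) * (4 * (2 - q) / A) ^ ((q - 2) / (3 - q))
        * abar ^ ((4 : ℝ) / 3) := by
    have hm' : m * m ^ ((q - 2) / (3 - q)) = m ^ (1 / (3 - q)) := by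
      rw [mul_comm, ← Real.rpow_add_one hm.ne']
      congr 1; field_simp; ring
    have habar' : abar ^ (2 - q / 3) * abar ^ ((1 : ℝ) / 3 * (q - 2))
        = abar ^ ((4 : ℝ) / 3) := by
      rw [← Real.rpow_add habarpos]; congr 1; ring
    rw [hrbar, Real.mul_rpow (by positivity) (by positivity), ← Real.rpow_mul (by positivity),
      ← Real.rpow_mul habarpos.le, Real.mul_rpow hK.le hm.le, ← habar', ← hm',
      show 1 / (3 - q) * (q - 2) = (q - 2) / (3 - q) by ring]
    ring
  rw [lowerFactor, sub_sub, hT1, hT2, ← add_mul, ← hα, habar43]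
  field_simp
  norm_num

lemma p_mul_γp_eq {p γp : ℝ} (hp : 0 < p) (hγ : γp = 3 * (p - 2) / (2 * p)) :
    p * γp = 3 * (p - 2) / 2 := by
  rw [hγ]; field_simp

lemma abar_pos_rbar_pos_lowerFactor_eq_zero {Λ C4 Cp l3 p γp α abar rbar : ℝ}
    (hΛ : 0 < Λ) (hC4 : 0 < C4) (hCp : 0 < Cp) (hl3 : l3 < 0)
    (hp1 : 2 < p) (hp2 : p < 10 / 3)
    (hγ : γp = 3 * (p - 2) / (2 * p))
    (hα : α = 1 / 2 * (Λ * C4 ^ 4) ^ ((p * γp - 2) / (p * γp - 3))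
        * (4 * |l3| * (2 - p * γp) * Cp ^ p / p) ^ (1 / (3 - p * γp))
      + 2 * (Cp ^ p * |l3| / p) ^ (1 / (3 - p * γp))
        * (4 * (2 - p * γp) / (Λ * C4 ^ 4)) ^ ((p * γp - 2) / (3 - p * γp)))
    (habar : abar = (1 / (2 * α)) ^ ((3 : ℝ) / 4))
    (hrbar : rbar = (4 * |l3| * (2 - p * γp) * Cp ^ p * abar ^ ((1 - γp) * p - 1)
      / (Λ * C4 ^ 4 * p)) ^ (1 / (3 - p * γp))) :
    0 < abar ∧ 0 < rbar ∧
      lowerFactor (Λ / 2 * C4 ^ 4) (2 * |l3| / p * Cp ^ p) (p * (1 - γp)) (p * γp - 2)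
        abar rbar = 0 := by
  have hq := p_mul_γp_eq (by linarith) hγ
  have hq2 : p * γp < 2 := by linarith
  have h2q : 0 < 2 - p * γp := by linarith
  have h3q : 3 - p * γp ≠ 0 := by linarith
  have hA : 0 < Λ * C4 ^ 4 := by positivity
  have hm : 0 < Cp ^ p * |l3| / p := by
    have := abs_pos.mpr hl3.ne
    have := Real.rpow_pos_of_pos hCp p
    positivity
  rw [show 4 * |l3| * (2 - p * γp) * Cp ^ p / p = 4 * (2 - p * γp) * (Cp ^ p * |l3| / p) by ring]
    at hα
  have habarpos : 0 < abar := by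
    have := alpha_pos hA hm hq2 hα
    rw [habar]; positivity
  have hrbar' : rbar = (4 * (2 - p * γp) / (Λ * C4 ^ 4) * (Cp ^ p * |l3| / p))
      ^ (1 / (3 - p * γp)) * abar ^ ((1 : ℝ) / 3) := by
    rw [hrbar, show 4 * |l3| * (2 - p * γp) * Cp ^ p * abar ^ ((1 - γp) * p - 1)
          / (Λ * C4 ^ 4 * p)
        = 4 * (2 - p * γp) / (Λ * C4 ^ 4) * (Cp ^ p * |l3| / p) * abar ^ ((1 - γp) * p - 1) by
        field_simp,
      Real.mul_rpow (by positivity) (by positivity), ← Real.rpow_mul habarpos.le]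
    congr 2
    rw [mul_one_div, div_eq_iff h3q]
    linear_combination (-2 / 3 : ℝ) * hq
  refine ⟨habarpos, by rw [hrbar']; positivity, ?_⟩
  have h := lowerFactor_abar_rbar_eq_zero hA hm hq2 hα habar hrbar'
  rw [show 2 - p * γp / 3 = p * (1 - γp) by linear_combination (2 / 3 : ℝ) * hq] at h
  convert h using 2 <;> ring

lemma lt_rpow_mul_of_lowerFactor_neg {A B s t abar rbar b r : ℝ} (hA : 0 ≤ A) (hB : 0 ≤ B)
    (ht : t ≤ 0) (hst : s + t / 3 = 4 / 3) (habar : 0 < abar) (hrbar : 0 < rbar)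
    (hthr : lowerFactor A B s t abar rbar = 0) (hb : 0 < b) (hbabar : b < abar)
    (hr : r < rbar) (hneg : lowerFactor A B s t b r < 0) :
    r < (b / abar) ^ ((1 : ℝ) / 3) * rbar := by
  -- otherwise the two negative terms of `g(b, r)` are at most `b/ā` and `(b/ā)^{4/3}` times
  -- those of `g(ā, r̄) = 0`
  by_contra! hle
  set μ := b / abar with hμ
  have hμ0 : 0 < μ := div_pos hb habar
  have hμ1 : μ ≤ 1 := (div_le_one habar).mpr hbabar.le
  have hT1 : A * r * b ≤ μ * (A * rbar * abar) := by
    rw [show μ * (A * rbar * abar) = A * rbar * b by rw [hμ]; field_simp]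
    gcongr
  have hT2 : B * b ^ s * r ^ t ≤ μ ^ ((4 : ℝ) / 3) * (B * abar ^ s * rbar ^ t) := by
    have hrt : r ^ t ≤ μ ^ (t / 3) * rbar ^ t := by
      calc r ^ t ≤ (μ ^ ((1 : ℝ) / 3) * rbar) ^ t :=
            Real.rpow_le_rpow_of_nonpos (by positivity) hle ht
        _ = μ ^ (t / 3) * rbar ^ t := by
            rw [Real.mul_rpow (by positivity) hrbar.le, ← Real.rpow_mul hμ0.le, one_div_mul_eq_div]
    have hbs : b ^ s = μ ^ s * abar ^ s := by
      rw [← Real.mul_rpow hμ0.le habar.le, hμ, div_mul_cancel₀ _ habar.ne']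
    calc B * b ^ s * r ^ t ≤ B * b ^ s * (μ ^ (t / 3) * rbar ^ t) :=
          mul_le_mul_of_nonneg_left hrt (by positivity)
      _ = (μ ^ s * μ ^ (t / 3)) * (B * abar ^ s * rbar ^ t) := by rw [hbs]; ring
      _ = μ ^ ((4 : ℝ) / 3) * (B * abar ^ s * rbar ^ t) := by rw [← Real.rpow_add hμ0, hst]
  have hμ43 : μ ^ ((4 : ℝ) / 3) ≤ 1 := Real.rpow_le_one hμ0.le hμ1 (by norm_num)
  have hpos1 : 0 ≤ A * rbar * abar := by positivity
  have hpos2 : 0 ≤ B * abar ^ s * rbar ^ t := by positivity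
  unfold lowerFactor at hthr hneg
  nlinarith

lemma gradSq_nonneg (u : E3 → ℝ) : 0 ≤ gradSq u :=
  integral_nonneg fun _ => by positivity

lemma Jfun_eq_Jfun_zero_add (ω l1 l2 l3 p : ℝ) (u : E3 → ℝ) :
    Jfun ω l1 l2 l3 p u = Jfun 0 l1 l2 l3 p u + ω * massSq u := by
  unfold Jfun; ring

section Wset

variable {l1 l2 l3 p ω A B s t abar rbar : ℝ}

lemma bddBelow_Jfun_image_Wset {a : ℝ} (hω : 0 ≤ ω) (hA : 0 ≤ A) (hB : 0 ≤ B) (ht : -2 < t)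
    (ha : 0 < a)
    (hlow : JfunLowerBound l1 l2 l3 p A B s t) :
    BddBelow (Jfun ω l1 l2 l3 p '' Wset a rbar) := by
  refine ⟨-(A * a * rbar ^ 3 + B * a ^ s * rbar ^ (2 + t)), ?_⟩
  rintro _ ⟨v, ⟨hmass, hgrad⟩, rfl⟩
  set r := Real.sqrt (gradSq v)
  have hr0 : 0 ≤ r := Real.sqrt_nonneg _
  have hr2 : gradSq v = r ^ 2 := (Real.sq_sqrt (gradSq_nonneg v)).symm
  have hexp : r ^ 2 * r ^ t = r ^ (2 + t) := by
    rw [Real.rpow_add' hr0 (by linarith), Real.rpow_two]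
  have h3 : r ^ 3 ≤ rbar ^ 3 := pow_le_pow_left₀ hr0 hgrad.le 3
  have h2t : r ^ (2 + t) ≤ rbar ^ (2 + t) := Real.rpow_le_rpow hr0 hgrad.le (by linarith)
  have hlow' : gradSq v * lowerFactor A B s t a r ≤ Jfun 0 l1 l2 l3 p v := hlow v a ha hmass
  have hexpand : gradSq v * lowerFactor A B s t a r
      = r ^ 2 / 2 - A * a * r ^ 3 - B * a ^ s * r ^ (2 + t) := by
    rw [hr2, ← hexp, lowerFactor]; ring
  rw [Jfun_eq_Jfun_zero_add, hmass]
  have := mul_le_mul_of_nonneg_left h3 (by positivity : 0 ≤ A * a)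
  have := mul_le_mul_of_nonneg_left h2t (by positivity : 0 ≤ B * a ^ s)
  nlinarith [sq_nonneg r, sq_nonneg a]

lemma gradSq_pos_and_lowerFactor_neg {b : ℝ} {u : E3 → ℝ} (hω : 0 ≤ ω) (hb : 0 < b)
    (hlow : JfunLowerBound l1 l2 l3 p A B s t)
    (hmass : massSq u = b ^ 2) (hJ : Jfun ω l1 l2 l3 p u < 0) :
    0 < gradSq u ∧ lowerFactor A B s t b (Real.sqrt (gradSq u)) < 0 := by
  have hJ0 : Jfun 0 l1 l2 l3 p u < 0 := by
    rw [Jfun_eq_Jfun_zero_add, hmass] at hJ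
    nlinarith
  have hprod := (hlow u b hb hmass).trans_lt hJ0
  refine ⟨(gradSq_nonneg u).lt_of_ne ?_, neg_of_mul_neg_right hprod (gradSq_nonneg u)⟩
  rintro h
  rw [← h, zero_mul] at hprod
  exact lt_irrefl 0 hprod

lemma exists_mem_Wset_Jfun_lt_sq_mul {a b : ℝ} {u : E3 → ℝ} (hω : 0 ≤ ω) (hA : 0 ≤ A)
    (hB : 0 ≤ B) (ht : t ≤ 0) (hst : s + t / 3 = 4 / 3) (habar : 0 < abar) (hrbar : 0 < rbar)
    (hthr : lowerFactor A B s t abar rbar = 0)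
    (hlow : JfunLowerBound l1 l2 l3 p A B s t)
    (hb : 0 < b) (hba : b < a) (ha : a < abar) (hu : u ∈ Wset b rbar)
    (hJ : Jfun ω l1 l2 l3 p u < 0) :
    ∃ v ∈ Wset a rbar, Jfun ω l1 l2 l3 p v < (a / b) ^ 2 * Jfun ω l1 l2 l3 p u := by
  obtain ⟨hmass, hgrad⟩ := hu
  obtain ⟨hG, hg⟩ := gradSq_pos_and_lowerFactor_neg hω hb hlow hmass hJ
  have hr := lt_rpow_mul_of_lowerFactor_neg hA hB ht hst habar hrbar hthr hb (hba.trans ha)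
    hgrad hg
  set θ := a / b with hθ
  have hθ1 : 1 < θ := (one_lt_div hb).mpr hba
  have hθ0 : 0 < θ := by linarith
  have ha0 : 0 < a := hb.trans hba
  set κ := θ ^ ((2 : ℝ) / 3) with hκ
  have hκ0 : 0 < κ := by positivity
  have hκ3 : κ ^ 3 = θ ^ 2 := by
    rw [hκ, ← Real.rpow_mul_natCast hθ0.le]; norm_num
  have hκθ : κ < θ ^ 2 := by
    rw [hκ, ← Real.rpow_two]
    exact Real.rpow_lt_rpow_of_exponent_lt hθ1 (by norm_num)
  refine ⟨fun x => u (κ⁻¹ • x), ⟨?_, ?_⟩, ?_⟩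
  · rw [massSq_dilate u hκ0, hmass, hκ3, hθ, div_pow]
    field_simp
  · have hsqrtκ : Real.sqrt κ = θ ^ ((1 : ℝ) / 3) := by
      rw [hκ, Real.sqrt_eq_rpow, ← Real.rpow_mul hθ0.le]; norm_num
    have hshrink : (a / abar) ^ ((1 : ℝ) / 3) < 1 :=
      Real.rpow_lt_one (by positivity) ((div_lt_one habar).mpr ha) (by norm_num)
    calc Real.sqrt (gradSq fun x => u (κ⁻¹ • x))
        = θ ^ ((1 : ℝ) / 3) * Real.sqrt (gradSq u) := by
          rw [gradSq_dilate u hκ0, Real.sqrt_mul hκ0.le, hsqrtκ]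
      _ < θ ^ ((1 : ℝ) / 3) * ((b / abar) ^ ((1 : ℝ) / 3) * rbar) :=
          mul_lt_mul_of_pos_left hr (by positivity)
      _ = (a / abar) ^ ((1 : ℝ) / 3) * rbar := by
          rw [← mul_assoc, ← Real.mul_rpow hθ0.le (by positivity), hθ,
            div_mul_div_cancel₀ hb.ne']
      _ < rbar := mul_lt_of_lt_one_left hrbar hshrink
  · rw [Jfun_dilate ω l1 l2 l3 p u hκ0, hκ3]
    nlinarith

lemma sInf_Jfun_Wset_le_sq_div_mul {a b : ℝ} (hω : 0 ≤ ω) (hA : 0 ≤ A) (hB : 0 ≤ B)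
    (ht : t ≤ 0) (ht2 : -2 < t) (hst : s + t / 3 = 4 / 3) (habar : 0 < abar) (hrbar : 0 < rbar)
    (hthr : lowerFactor A B s t abar rbar = 0)
    (hlow : JfunLowerBound l1 l2 l3 p A B s t)
    (hb : 0 < b) (hba : b < a) (ha : a < abar)
    (hneg : sInf (Jfun ω l1 l2 l3 p '' Wset b rbar) < 0) :
    sInf (Jfun ω l1 l2 l3 p '' Wset a rbar)
      ≤ (a / b) ^ 2 * sInf (Jfun ω l1 l2 l3 p '' Wset b rbar) :=
  sInf_image_le_mul_sInf_image (pow_pos (div_pos (hb.trans hba) hb) 2)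
    (bddBelow_Jfun_image_Wset hω hA hB ht2 (hb.trans hba) hlow) hneg
    fun _ hu hJ => exists_mem_Wset_Jfun_lt_sq_mul hω hA hB ht hst habar hrbar hthr hlow hb hba ha
      hu hJ

lemma sInf_Jfun_Wset_lt_sq_div_mul {a b : ℝ} (hω : 0 ≤ ω) (hA : 0 ≤ A) (hB : 0 ≤ B)
    (ht : t ≤ 0) (ht2 : -2 < t) (hst : s + t / 3 = 4 / 3) (habar : 0 < abar) (hrbar : 0 < rbar)
    (hthr : lowerFactor A B s t abar rbar = 0)
    (hlow : JfunLowerBound l1 l2 l3 p A B s t)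
    (hb : 0 < b) (hba : b < a) (ha : a < abar)
    (hneg : sInf (Jfun ω l1 l2 l3 p '' Wset b rbar) < 0)
    (hmin : ∃ u ∈ Wset b rbar, Jfun ω l1 l2 l3 p u = sInf (Jfun ω l1 l2 l3 p '' Wset b rbar)) :
    sInf (Jfun ω l1 l2 l3 p '' Wset a rbar)
      < (a / b) ^ 2 * sInf (Jfun ω l1 l2 l3 p '' Wset b rbar) :=
  sInf_image_lt_mul_sInf_image (bddBelow_Jfun_image_Wset hω hA hB ht2 (hb.trans hba) hlow) hneg
    (fun _ hu hJ => exists_mem_Wset_Jfun_lt_sq_mul hω hA hB ht hst habar hrbar hthr hlow hb hba ha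
      hu hJ) hmin

end Wset

theorem stmt17_general (Λ C4 Cp l1 l2 l3 ω p γp α a1 a2 abar rbar : ℝ) (g : ℝ → ℝ → ℝ)
    (hΛ : 0 < Λ) (hC4 : 0 < C4) (hCp : 0 < Cp)
    (hl3 : l3 < 0)
    (hp1 : 2 < p) (hp2 : p < 10 / 3) (hω : 0 ≤ ω)
    (hγ : γp = 3 * (p - 2) / (2 * p))
    (hg : g = fun b r => 1 / 2 - Λ / 2 * C4 ^ 4 * r * b
      - 2 * |l3| / p * Cp ^ p * b ^ (p * (1 - γp)) * r ^ (p * γp - 2))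
    (hα : α = 1 / 2 * (Λ * C4 ^ 4) ^ ((p * γp - 2) / (p * γp - 3))
        * (4 * |l3| * (2 - p * γp) * Cp ^ p / p) ^ (1 / (3 - p * γp))
      + 2 * (Cp ^ p * |l3| / p) ^ (1 / (3 - p * γp))
        * (4 * (2 - p * γp) / (Λ * C4 ^ 4)) ^ ((p * γp - 2) / (3 - p * γp)))
    (habar : abar = (1 / (2 * α)) ^ ((3 : ℝ) / 4))
    (hrbar : rbar = (4 * |l3| * (2 - p * γp) * Cp ^ p * abar ^ ((1 - γp) * p - 1)
      / (Λ * C4 ^ 4 * p)) ^ (1 / (3 - p * γp)))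
    (ha1 : 0 < a1) (h12 : a1 < a2) (ha2 : a2 < abar)
    (hJlow : ∀ (u : E3 → ℝ) (b : ℝ), 0 < b → massSq u = b ^ 2 →
      gradSq u * g b (Real.sqrt (gradSq u)) ≤ Jfun 0 l1 l2 l3 p u)
    (hneg1 : sInf (Jfun ω l1 l2 l3 p '' Wset a1 rbar) < 0)
    (hneg3 : sInf (Jfun ω l1 l2 l3 p '' Wset (Real.sqrt (a2 ^ 2 - a1 ^ 2)) rbar) < 0) :
    sInf (Jfun ω l1 l2 l3 p '' Wset a2 rbar)
        ≤ sInf (Jfun ω l1 l2 l3 p '' Wset a1 rbar)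
          + sInf (Jfun ω l1 l2 l3 p '' Wset (Real.sqrt (a2 ^ 2 - a1 ^ 2)) rbar) ∧
      ((∃ u ∈ Wset a1 rbar,
          Jfun ω l1 l2 l3 p u = sInf (Jfun ω l1 l2 l3 p '' Wset a1 rbar)) ∨
       (∃ u ∈ Wset (Real.sqrt (a2 ^ 2 - a1 ^ 2)) rbar,
          Jfun ω l1 l2 l3 p u
            = sInf (Jfun ω l1 l2 l3 p '' Wset (Real.sqrt (a2 ^ 2 - a1 ^ 2)) rbar)) →
        sInf (Jfun ω l1 l2 l3 p '' Wset a2 rbar)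
          < sInf (Jfun ω l1 l2 l3 p '' Wset a1 rbar)
            + sInf (Jfun ω l1 l2 l3 p '' Wset (Real.sqrt (a2 ^ 2 - a1 ^ 2)) rbar)) := by
  obtain ⟨habar0, hrbar0, hthr⟩ :=
    abar_pos_rbar_pos_lowerFactor_eq_zero hΛ hC4 hCp hl3 hp1 hp2 hγ hα habar hrbar
  have hq := p_mul_γp_eq (by linarith) hγ
  have hlow : JfunLowerBound l1 l2 l3 p (Λ / 2 * C4 ^ 4) (2 * |l3| / p * Cp ^ p) (p * (1 - γp))
      (p * γp - 2) := by
    subst hg; exact hJlow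
  have hA : 0 ≤ Λ / 2 * C4 ^ 4 := by positivity
  have hB : 0 ≤ 2 * |l3| / p * Cp ^ p := by
    have : 0 < p := by linarith
    positivity
  have ht : p * γp - 2 ≤ 0 := by linarith
  have ht2 : -2 < p * γp - 2 := by linarith
  have hst : p * (1 - γp) + (p * γp - 2) / 3 = 4 / 3 := by linear_combination (-2 / 3 : ℝ) * hq
  have hle {b : ℝ} (hb : 0 < b) (hba : b < a2) :=
    sInf_Jfun_Wset_le_sq_div_mul hω hA hB ht ht2 hst habar0 hrbar0 hthr hlow hb hba ha2
  have hlt {b : ℝ} (hb : 0 < b) (hba : b < a2) :=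
    sInf_Jfun_Wset_lt_sq_div_mul hω hA hB ht ht2 hst habar0 hrbar0 hthr hlow hb hba ha2
  set c := Real.sqrt (a2 ^ 2 - a1 ^ 2)
  have hd : 0 < a2 ^ 2 - a1 ^ 2 := by nlinarith
  have hc0 : 0 < c := Real.sqrt_pos.mpr hd
  have habc : a1 ^ 2 + c ^ 2 = a2 ^ 2 := by rw [Real.sq_sqrt hd.le]; ring
  have hca2 : c < a2 := by nlinarith
  refine ⟨le_add_of_le_sq_div_mul ha1.ne' hc0.ne' habc (hle ha1 h12 hneg1) (hle hc0 hca2 hneg3),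
    ?_⟩
  rintro (hmin | hmin)
  · exact lt_add_of_lt_sq_div_mul ha1.ne' hc0.ne' habc (hlt ha1 h12 hneg1 hmin)
      (hle hc0 hca2 hneg3)
  · rw [add_comm]
    exact lt_add_of_lt_sq_div_mul hc0.ne' ha1.ne' (by rw [add_comm, habc])
      (hlt hc0 hca2 hneg3 hmin) (hle ha1 h12 hneg1)

/-- for `0 < a₁ < a₂ < ā` and `0 ≤ ω < V⁎` (so that the local infima are
negative), `Υ_ω(a₂) ≤ Υ_ω(a₁) + Υ_ω(√(a₂²-a₁²))`; moreover, if `Υ_ω(a₁)` or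
`Υ_ω(√(a₂²-a₁²))` is attained, the inequality is strict. -/
theorem stmt17 (Λ C4 Cp l1 l2 l3 ω p γp α a1 a2 abar rbar : ℝ) (g : ℝ → ℝ → ℝ)
    (hΛ : 0 < Λ) (hC4 : 0 < C4) (hCp : 0 < Cp)
    (hB : (l1, l2) ∈ Bset) (hl3 : l3 < 0)
    (hp1 : 2 < p) (hp2 : p < 10 / 3) (hω : 0 ≤ ω)
    (hγ : γp = 3 * (p - 2) / (2 * p))
    (hg : g = fun b r => 1 / 2 - Λ / 2 * C4 ^ 4 * r * b
      - 2 * |l3| / p * Cp ^ p * b ^ (p * (1 - γp)) * r ^ (p * γp - 2))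
    (hα : α = 1 / 2 * (Λ * C4 ^ 4) ^ ((p * γp - 2) / (p * γp - 3))
        * (4 * |l3| * (2 - p * γp) * Cp ^ p / p) ^ (1 / (3 - p * γp))
      + 2 * (Cp ^ p * |l3| / p) ^ (1 / (3 - p * γp))
        * (4 * (2 - p * γp) / (Λ * C4 ^ 4)) ^ ((p * γp - 2) / (3 - p * γp)))
    (habar : abar = (1 / (2 * α)) ^ ((3 : ℝ) / 4))
    (hrbar : rbar = (4 * |l3| * (2 - p * γp) * Cp ^ p * abar ^ ((1 - γp) * p - 1)
      / (Λ * C4 ^ 4 * p)) ^ (1 / (3 - p * γp)))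
    (ha1 : 0 < a1) (h12 : a1 < a2) (ha2 : a2 < abar)
    (hJlow : ∀ (u : E3 → ℝ) (b : ℝ), 0 < b → massSq u = b ^ 2 →
      gradSq u * g b (Real.sqrt (gradSq u)) ≤ Jfun 0 l1 l2 l3 p u)
    (hneg1 : sInf (Jfun ω l1 l2 l3 p '' Wset a1 rbar) < 0)
    (hneg3 : sInf (Jfun ω l1 l2 l3 p '' Wset (Real.sqrt (a2 ^ 2 - a1 ^ 2)) rbar) < 0) :
    sInf (Jfun ω l1 l2 l3 p '' Wset a2 rbar)
        ≤ sInf (Jfun ω l1 l2 l3 p '' Wset a1 rbar)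
          + sInf (Jfun ω l1 l2 l3 p '' Wset (Real.sqrt (a2 ^ 2 - a1 ^ 2)) rbar) ∧
      ((∃ u ∈ Wset a1 rbar,
          Jfun ω l1 l2 l3 p u = sInf (Jfun ω l1 l2 l3 p '' Wset a1 rbar)) ∨
       (∃ u ∈ Wset (Real.sqrt (a2 ^ 2 - a1 ^ 2)) rbar,
          Jfun ω l1 l2 l3 p u
            = sInf (Jfun ω l1 l2 l3 p '' Wset (Real.sqrt (a2 ^ 2 - a1 ^ 2)) rbar)) →
        sInf (Jfun ω l1 l2 l3 p '' Wset a2 rbar)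
          < sInf (Jfun ω l1 l2 l3 p '' Wset a1 rbar)
            + sInf (Jfun ω l1 l2 l3 p '' Wset (Real.sqrt (a2 ^ 2 - a1 ^ 2)) rbar)) :=
  stmt17_general Λ C4 Cp l1 l2 l3 ω p γp α a1 a2 abar rbar g hΛ hC4 hCp hl3 hp1 hp2 hω hγ hg hα
    habar hrbar ha1 h12 ha2 hJlow hneg1 hneg3
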